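/- Let η ∈ ℂ∖Λ and set V(x) = ζ(x+η) − ζ(x). Let x₁, x₂, f₁, f₂ : ℝ → ℂ be differentiable with x₁(t)−x₂(t) ∉ Λ and η ± (x₁(t)−x₂(t)) ∉ Λ for all t, satisfying the Hamiltonian flow with z₀ = η: ẋ₁ = f₁, ẋ₂ = f₂, ḟ₁ = −f₁ f₂ (ζ(η+x₁−x₂) − ζ(η−x₁+x₂) − 2ζ(x₁−x₂)), ḟ₂ = f₁ f₂ (ζ(η+x₁−x₂) − ζ(η−x₁+x₂) − 2ζ(x₁−x₂)). Then x₁, x₂ satisfy the (spinless) Ruijsenaars–Schneider equations of motion for two particles: ẍ₁ = ẋ₁ ẋ₂ (V(x₂−x₁) − V(x₁−x₂)) and ẍ₂ = ẋ₁ ẋ₂ (V(x₁−x₂) − V(x₂−x₁)). -/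

import Mathlib

noncomputable section
open Complex

/-- The lattice Λ = ℤω₁ + ℤω₂. -/
def lattice (ω₁ ω₂ : ℂ) : Set ℂ := {z | ∃ m n : ℤ, z = m * ω₁ + n * ω₂}

/-- The Weierstrass zeta function ζ(z) = 1/z + Σ_{ω ∈ Λ∖{0}} (1/(z−ω) + 1/ω + z/ω²). -/
def wzeta (ω₁ ω₂ : ℂ) (z : ℂ) : ℂ :=
  1 / z + ∑' w : {w : ℂ // w ∈ lattice ω₁ ω₂ ∧ w ≠ 0},
    (1 / (z - (w : ℂ)) + 1 / (w : ℂ) + z / (w : ℂ) ^ 2)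

/-! Reindexing the series by `ω ↦ −ω` shows that ζ is odd, so
`V(−x) − V(x) = −(ζ(η+x) − ζ(η−x) − 2ζ(x))`, which is minus the force in the flow with
`z₀ = η`; substituting `ẋᵢ = fᵢ` into `ḟᵢ` gives the Ruijsenaars–Schneider equations. -/

theorem neg_mem_lattice {ω₁ ω₂ z : ℂ} (hz : z ∈ lattice ω₁ ω₂) : -z ∈ lattice ω₁ ω₂ := by
  obtain ⟨m, n, rfl⟩ := hz
  exact ⟨-m, -n, by push_cast; ring⟩

theorem neg_mem_lattice_iff {ω₁ ω₂ z : ℂ} : -z ∈ lattice ω₁ ω₂ ↔ z ∈ lattice ω₁ ω₂ :=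
  ⟨fun h => neg_neg z ▸ neg_mem_lattice h, neg_mem_lattice⟩

def latticeNeg (ω₁ ω₂ : ℂ) :
    {w : ℂ // w ∈ lattice ω₁ ω₂ ∧ w ≠ 0} ≃ {w : ℂ // w ∈ lattice ω₁ ω₂ ∧ w ≠ 0} :=
  (Equiv.neg ℂ).subtypeEquiv fun w => by
    simp only [Equiv.neg_apply, neg_mem_lattice_iff, ne_eq, neg_eq_zero]

theorem wzeta_neg (ω₁ ω₂ z : ℂ) : wzeta ω₁ ω₂ (-z) = -wzeta ω₁ ω₂ z := by
  rw [wzeta, wzeta, ← (latticeNeg ω₁ ω₂).tsum_eq, neg_add, ← tsum_neg]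
  congr 1
  · ring
  · refine tsum_congr fun w => ?_
    change 1 / (-z - -(w : ℂ)) + 1 / -(w : ℂ) + -z / (-(w : ℂ)) ^ 2 = _
    rw [neg_sub_neg, ← neg_sub, div_neg, div_neg, neg_sq]
    ring

theorem potential_neg_sub_potential {ω₁ ω₂ η : ℂ} {V : ℂ → ℂ}
    (hV : ∀ x, V x = wzeta ω₁ ω₂ (x + η) - wzeta ω₁ ω₂ x) (x : ℂ) :
    V (-x) - V x = -(wzeta ω₁ ω₂ (η + x) - wzeta ω₁ ω₂ (η - x) - 2 * wzeta ω₁ ω₂ x) := by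
  rw [hV, hV, wzeta_neg, neg_add_eq_sub, add_comm x η]
  ring

theorem flow_gives_spinless_RS_general (ω₁ ω₂ : ℂ) (η : ℂ)
    (V : ℂ → ℂ) (hV : ∀ x, V x = wzeta ω₁ ω₂ (x + η) - wzeta ω₁ ω₂ x)
    (x₁ x₂ f₁ f₂ : ℝ → ℂ)
    (hflow₁ : ∀ t, deriv x₁ t = f₁ t) (hflow₂ : ∀ t, deriv x₂ t = f₂ t)
    (hflow₃ : ∀ t, deriv f₁ t = -(f₁ t * f₂ t
      * (wzeta ω₁ ω₂ (η + x₁ t - x₂ t) - wzeta ω₁ ω₂ (η - x₁ t + x₂ t)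
        - 2 * wzeta ω₁ ω₂ (x₁ t - x₂ t))))
    (hflow₄ : ∀ t, deriv f₂ t = f₁ t * f₂ t
      * (wzeta ω₁ ω₂ (η + x₁ t - x₂ t) - wzeta ω₁ ω₂ (η - x₁ t + x₂ t)
        - 2 * wzeta ω₁ ω₂ (x₁ t - x₂ t))) :
    (∀ t, deriv (deriv x₁) t
      = deriv x₁ t * deriv x₂ t * (V (x₂ t - x₁ t) - V (x₁ t - x₂ t))) ∧
    (∀ t, deriv (deriv x₂) t
      = deriv x₁ t * deriv x₂ t * (V (x₁ t - x₂ t) - V (x₂ t - x₁ t))) := by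
  have hforce : ∀ t, V (x₂ t - x₁ t) - V (x₁ t - x₂ t)
      = -(wzeta ω₁ ω₂ (η + x₁ t - x₂ t) - wzeta ω₁ ω₂ (η - x₁ t + x₂ t)
        - 2 * wzeta ω₁ ω₂ (x₁ t - x₂ t)) := fun t => by
    rw [← neg_sub (x₁ t), potential_neg_sub_potential hV, add_sub_assoc, sub_add]
  rw [funext hflow₁, funext hflow₂]
  exact ⟨fun t => by linear_combination hflow₃ t - f₁ t * f₂ t * hforce t,
    fun t => by linear_combination hflow₄ t + f₁ t * f₂ t * hforce t⟩

/-- With z₀ = η, the Hamiltonian flow reduces to the spinless two-particle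
Ruijsenaars–Schneider equations of motion ẍ₁ = ẋ₁ẋ₂ (V(x₂−x₁) − V(x₁−x₂)),
ẍ₂ = ẋ₁ẋ₂ (V(x₁−x₂) − V(x₂−x₁)), where V(x) = ζ(x+η) − ζ(x). -/
theorem flow_gives_spinless_RS (ω₁ ω₂ : ℂ) (hω : (ω₂ / ω₁).im ≠ 0) (η : ℂ)
    (hη : η ∉ lattice ω₁ ω₂)
    (V : ℂ → ℂ) (hV : ∀ x, V x = wzeta ω₁ ω₂ (x + η) - wzeta ω₁ ω₂ x)
    (x₁ x₂ f₁ f₂ : ℝ → ℂ)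
    (hx₁ : Differentiable ℝ x₁) (hx₂ : Differentiable ℝ x₂)
    (hf₁ : Differentiable ℝ f₁) (hf₂ : Differentiable ℝ f₂)
    (hreg : ∀ t : ℝ, x₁ t - x₂ t ∉ lattice ω₁ ω₂ ∧
      η + (x₁ t - x₂ t) ∉ lattice ω₁ ω₂ ∧ η - (x₁ t - x₂ t) ∉ lattice ω₁ ω₂)
    (hflow₁ : ∀ t, deriv x₁ t = f₁ t) (hflow₂ : ∀ t, deriv x₂ t = f₂ t)
    (hflow₃ : ∀ t, deriv f₁ t = -(f₁ t * f₂ t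
      * (wzeta ω₁ ω₂ (η + x₁ t - x₂ t) - wzeta ω₁ ω₂ (η - x₁ t + x₂ t)
        - 2 * wzeta ω₁ ω₂ (x₁ t - x₂ t))))
    (hflow₄ : ∀ t, deriv f₂ t = f₁ t * f₂ t
      * (wzeta ω₁ ω₂ (η + x₁ t - x₂ t) - wzeta ω₁ ω₂ (η - x₁ t + x₂ t)
        - 2 * wzeta ω₁ ω₂ (x₁ t - x₂ t))) :
    (∀ t, deriv (deriv x₁) t
      = deriv x₁ t * deriv x₂ t * (V (x₂ t - x₁ t) - V (x₁ t - x₂ t))) ∧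
    (∀ t, deriv (deriv x₂) t
      = deriv x₁ t * deriv x₂ t * (V (x₁ t - x₂ t) - V (x₂ t - x₁ t))) :=
  flow_gives_spinless_RS_general ω₁ ω₂ η V hV x₁ x₂ f₁ f₂ hflow₁ hflow₂ hflow₃ hflow₄
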